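/- The inhomogeneous (anomalous) term of the σ⁰ transformation law satisfies the cocycle condition: with c_s := ð²f_s ∈ R[u] and D_s := D_s^{(3/2,−1/2)}, one has, for all symmetry parameters s₁, s₂, D_{s₁}c_{s₂} − D_{s₂}c_{s₁} = c_{[s₁,s₂]}. -/

import Mathlib

/-!
Common setup: we work over `ℂ` with flat conformal factor `φ̃ = 0`, so `P = √2` and the
eth operators reduce to `ð = √2 ∂_ζ̄` and `ð̄ = √2 ∂_ζ` on the ring `R[u]` of polynomials
in `u` with coefficients in `R = ℂ[ζ,ζ⁻¹,ζ̄,ζ̄⁻¹]`, which also carries `∂_u`.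

`R[u]` is modelled as `RU := AddMonoidAlgebra ℂ (ℤ × ℤ × ℕ)`, the monomial
`single (m,n,k) 1` representing `ζ^m ζ̄^n u^k`; `R` is `AddMonoidAlgebra ℂ (ℤ × ℤ)`, and
`ℂ[ζ,ζ⁻¹]`, `ℂ[ζ̄,ζ̄⁻¹]` are copies of `AddMonoidAlgebra ℂ ℤ`, all included into `RU`.
-/

/-- `R[u]`, with `single (m,n,k) 1 = ζ^m ζ̄^n u^k`. -/
abbrev RU : Type := AddMonoidAlgebra ℂ (ℤ × ℤ × ℕ)

/-- `R = ℂ[ζ,ζ⁻¹,ζ̄,ζ̄⁻¹]`. -/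
abbrev LR : Type := AddMonoidAlgebra ℂ (ℤ × ℤ)

/-- A copy of `ℂ[ζ,ζ⁻¹]` (resp. `ℂ[ζ̄,ζ̄⁻¹]`). -/
abbrev W : Type := AddMonoidAlgebra ℂ ℤ

/-- `ð = √2 ∂_ζ̄` on `R[u]`. -/
noncomputable def eth : RU →ₗ[ℂ] RU :=
  (AddMonoidAlgebra.coeffLinearEquiv ℂ).symm.toLinearMap ∘ₗ (Finsupp.lsum ℂ fun p : ℤ × ℤ × ℕ =>
    ((Real.sqrt 2 : ℂ) * p.2.1) • Finsupp.lsingle (p.1, p.2.1 - 1, p.2.2)) ∘ₗ (AddMonoidAlgebra.coeffLinearEquiv ℂ).toLinearMap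

/-- `ð̄ = √2 ∂_ζ` on `R[u]`. -/
noncomputable def ethBar : RU →ₗ[ℂ] RU :=
  (AddMonoidAlgebra.coeffLinearEquiv ℂ).symm.toLinearMap ∘ₗ (Finsupp.lsum ℂ fun p : ℤ × ℤ × ℕ =>
    ((Real.sqrt 2 : ℂ) * p.1) • Finsupp.lsingle (p.1 - 1, p.2.1, p.2.2)) ∘ₗ (AddMonoidAlgebra.coeffLinearEquiv ℂ).toLinearMap

/-- `∂_u` on `R[u]`. -/
noncomputable def du : RU →ₗ[ℂ] RU :=
  (AddMonoidAlgebra.coeffLinearEquiv ℂ).symm.toLinearMap ∘ₗ (Finsupp.lsum ℂ fun p : ℤ × ℤ × ℕ =>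
    (p.2.2 : ℂ) • Finsupp.lsingle (p.1, p.2.1, p.2.2 - 1)) ∘ₗ (AddMonoidAlgebra.coeffLinearEquiv ℂ).toLinearMap

/-- The element `u ∈ R[u]`. -/
noncomputable def uVar : RU := AddMonoidAlgebra.single ((0 : ℤ), (0 : ℤ), (1 : ℕ)) (1 : ℂ)

/-- The inclusion `ℂ[ζ̄,ζ̄⁻¹] ↪ R[u]`, `ζ̄^n ↦ ζ̄^n`. -/
noncomputable def incY : W →ₗ[ℂ] RU := (AddMonoidAlgebra.coeffLinearEquiv ℂ).symm.toLinearMap ∘ₗ (Finsupp.lsum ℂ fun n : ℤ => Finsupp.lsingle (0, n, 0)) ∘ₗ (AddMonoidAlgebra.coeffLinearEquiv ℂ).toLinearMap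

/-- The inclusion `ℂ[ζ,ζ⁻¹] ↪ R[u]`, `ζ^m ↦ ζ^m`. -/
noncomputable def incYb : W →ₗ[ℂ] RU := (AddMonoidAlgebra.coeffLinearEquiv ℂ).symm.toLinearMap ∘ₗ (Finsupp.lsum ℂ fun m : ℤ => Finsupp.lsingle (m, 0, 0)) ∘ₗ (AddMonoidAlgebra.coeffLinearEquiv ℂ).toLinearMap

/-- The inclusion `R ↪ R[u]`. -/
noncomputable def incT : LR →ₗ[ℂ] RU :=
  (AddMonoidAlgebra.coeffLinearEquiv ℂ).symm.toLinearMap ∘ₗ (Finsupp.lsum ℂ fun q : ℤ × ℤ => Finsupp.lsingle (q.1, q.2, 0)) ∘ₗ (AddMonoidAlgebra.coeffLinearEquiv ℂ).toLinearMap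

/-- `ð` on the copy `ℂ[ζ̄,ζ̄⁻¹]` (equivalently `ð̄` on the copy `ℂ[ζ,ζ⁻¹]`):
`√2` times the formal derivative. -/
noncomputable def ethW : W →ₗ[ℂ] W :=
  (AddMonoidAlgebra.coeffLinearEquiv ℂ).symm.toLinearMap ∘ₗ (Finsupp.lsum ℂ fun n : ℤ => ((Real.sqrt 2 : ℂ) * n) • Finsupp.lsingle (n - 1)) ∘ₗ (AddMonoidAlgebra.coeffLinearEquiv ℂ).toLinearMap

/-- `ð = √2 ∂_ζ̄` on `R`. -/
noncomputable def ethR : LR →ₗ[ℂ] LR :=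
  (AddMonoidAlgebra.coeffLinearEquiv ℂ).symm.toLinearMap ∘ₗ (Finsupp.lsum ℂ fun q : ℤ × ℤ => ((Real.sqrt 2 : ℂ) * q.2) • Finsupp.lsingle (q.1, q.2 - 1)) ∘ₗ (AddMonoidAlgebra.coeffLinearEquiv ℂ).toLinearMap

/-- `ð̄ = √2 ∂_ζ` on `R`. -/
noncomputable def ethBarR : LR →ₗ[ℂ] LR :=
  (AddMonoidAlgebra.coeffLinearEquiv ℂ).symm.toLinearMap ∘ₗ (Finsupp.lsum ℂ fun q : ℤ × ℤ => ((Real.sqrt 2 : ℂ) * q.1) • Finsupp.lsingle (q.1 - 1, q.2)) ∘ₗ (AddMonoidAlgebra.coeffLinearEquiv ℂ).toLinearMap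

/-- The inclusion `ℂ[ζ̄,ζ̄⁻¹] ↪ R`. -/
noncomputable def jY : W →ₗ[ℂ] LR := (AddMonoidAlgebra.coeffLinearEquiv ℂ).symm.toLinearMap ∘ₗ (Finsupp.lsum ℂ fun n : ℤ => Finsupp.lsingle (0, n)) ∘ₗ (AddMonoidAlgebra.coeffLinearEquiv ℂ).toLinearMap

/-- The inclusion `ℂ[ζ,ζ⁻¹] ↪ R`. -/
noncomputable def jYb : W →ₗ[ℂ] LR := (AddMonoidAlgebra.coeffLinearEquiv ℂ).symm.toLinearMap ∘ₗ (Finsupp.lsum ℂ fun m : ℤ => Finsupp.lsingle (m, 0)) ∘ₗ (AddMonoidAlgebra.coeffLinearEquiv ℂ).toLinearMap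

/-- A symmetry parameter `s = (𝒴, 𝒴̄, T)` with `𝒴 ∈ ℂ[ζ̄,ζ̄⁻¹]`, `𝒴̄ ∈ ℂ[ζ,ζ⁻¹]`
(so that `ð̄𝒴 = 0 = ð𝒴̄`, the conformal Killing equations) and `T ∈ R`. -/
structure SymParam : Type where
  /-- `𝒴`, a function of `ζ̄`. -/
  cY : W
  /-- `𝒴̄`, a function of `ζ`. -/
  cYb : W
  /-- The supertranslation part `T ∈ R`. -/
  T : LR

/-- `ψ_s = ð𝒴 + ð̄𝒴̄ ∈ R`. -/
noncomputable def psiR (s : SymParam) : LR := jY (ethW s.cY) + jYb (ethW s.cYb)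

/-- `f_s = T + (u/2) ψ_s ∈ R[u]`. -/
noncomputable def fOf (s : SymParam) : RU :=
  incT s.T + (1 / 2 : ℂ) • (uVar * incT (psiR s))

/-- The `𝔟𝔪𝔰₄` bracket `[s₁,s₂] = ŝ` on symmetry parameters:
`𝒴̂ = 𝒴₁ð𝒴₂ − 𝒴₂ð𝒴₁`, `𝒴̄̂ = 𝒴̄₁ð̄𝒴̄₂ − 𝒴̄₂ð̄𝒴̄₁`,
`T̂ = 𝒴₁ðT₂ + 𝒴̄₁ð̄T₂ − 𝒴₂ðT₁ − 𝒴̄₂ð̄T₁ − ½(ψ₁T₂ − ψ₂T₁)`. -/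
noncomputable def sBracket (s₁ s₂ : SymParam) : SymParam where
  cY := s₁.cY * ethW s₂.cY - s₂.cY * ethW s₁.cY
  cYb := s₁.cYb * ethW s₂.cYb - s₂.cYb * ethW s₁.cYb
  T := jY s₁.cY * ethR s₂.T + jYb s₁.cYb * ethBarR s₂.T
      - jY s₂.cY * ethR s₁.T - jYb s₂.cYb * ethBarR s₁.T
      - (1 / 2 : ℂ) • (psiR s₁ * s₂.T - psiR s₂ * s₁.T)

/-- The first-order differential operator
`D_s^{(k,k̄)} = f_s∂_u + 𝒴ð + 𝒴̄ð̄ + k(ð𝒴) + k̄(ð̄𝒴̄)` on `R[u]`, the last two terms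
acting by multiplication. -/
noncomputable def Dop (k kb : ℂ) (s : SymParam) : RU →ₗ[ℂ] RU :=
  (LinearMap.mulLeft ℂ (fOf s)).comp du
    + (LinearMap.mulLeft ℂ (incY s.cY)).comp eth
    + (LinearMap.mulLeft ℂ (incYb s.cYb)).comp ethBar
    + k • LinearMap.mulLeft ℂ (eth (incY s.cY))
    + kb • LinearMap.mulLeft ℂ (ethBar (incYb s.cYb))

/-- The inhomogeneous (anomalous) term `c_s = ð²f_s ∈ R[u]` of the `σ⁰` transformation
law. -/
noncomputable def cOf (s : SymParam) : RU := eth (eth (fOf s))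

/-!
Let `X_s = D_s^{(0,0)} = f_s ∂_u + 𝒴 ð + 𝒴̄ ð̄`. The bracket is the commutator of these vector
fields, `f_{[s,t]} = X_s f_t - X_t f_s`, hence `c_{[s,t]} = ð² X_s f_t - ð² X_t f_s`. Moving `ð²`
past `X_s` by the Leibniz rule gives
`ð² X_s g = D_s ð²g + ½ ψ_s ð²g + c_s ∂_u g + 2 ðf_s ∂_u ðg + (ð²𝒴) ðg`, and for `g = f_t`, where
`∂_u f_t = ½ ψ_t` and `2 ∂_u ð f_t = ð²𝒴_t`, the remainder
`ð² X_s f_t - D_s c_t = ½ (ψ_s c_t + ψ_t c_s) + ðf_s ð²𝒴_t + ðf_t ð²𝒴_s`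
is symmetric in `s, t`, so it cancels from `c_{[s,t]}`.

All the operators involved are weighted shifts `single g c ↦ single (σ g) (a g * c)` of
monomials, and their Leibniz rules and commutation relations reduce to identities of weights.
-/

namespace AddMonoidAlgebra

variable {k G H : Type*} [CommSemiring k]

noncomputable def weightedShift (a : G → k) (σ : G → H) :
    AddMonoidAlgebra k G →ₗ[k] AddMonoidAlgebra k H :=
  (coeffLinearEquiv k).symm.toLinearMap ∘ₗ
    (Finsupp.lsum k fun g => a g • Finsupp.lsingle (σ g)) ∘ₗ (coeffLinearEquiv k).toLinearMap

@[simp]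
theorem weightedShift_single (a : G → k) (σ : G → H) (g : G) (c : k) :
    weightedShift a σ (single g c) = single (σ g) (a g * c) := by
  simp [weightedShift, -Finsupp.single_mul, Finsupp.smul_single]

theorem lsum_lsingle_eq_mapDomainLinearMap (σ : G → H) :
    (coeffLinearEquiv k).symm.toLinearMap ∘ₗ (Finsupp.lsum k fun g => Finsupp.lsingle (σ g)) ∘ₗ
      (coeffLinearEquiv k).toLinearMap = mapDomainLinearMap k k σ := by
  ext; simp

theorem weightedShift_mapDomain {a : H → k} {σ : H → H} {b : G → k} {τ : G → G} {ι : G → H}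
    (ha : ∀ g, a (ι g) = b g) (hσ : ∀ g, σ (ι g) = ι (τ g)) (x : AddMonoidAlgebra k G) :
    weightedShift a σ (mapDomain ι x) = mapDomain ι (weightedShift b τ x) := by
  induction x using induction_linear with
  | zero => simp
  | add x y hx hy => simp only [mapDomain_add, map_add, hx, hy]
  | single g c => simp [ha, hσ]

theorem weightedShift_mapDomain_eq_zero {a : H → k} {σ : H → H} {ι : G → H}
    (ha : ∀ g, a (ι g) = 0) (x : AddMonoidAlgebra k G) :
    weightedShift a σ (mapDomain ι x) = 0 := by
  induction x using induction_linear with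
  | zero => simp
  | add x y hx hy => simp only [mapDomain_add, map_add, hx, hy, add_zero]
  | single g c => simp [ha]

theorem weightedShift_comm {a b : G → k} {σ τ : G → G} (hσ : ∀ g, σ (τ g) = τ (σ g))
    (ha : ∀ g, a (τ g) * b g = b (σ g) * a g) (x : AddMonoidAlgebra k G) :
    weightedShift a σ (weightedShift b τ x) = weightedShift b τ (weightedShift a σ x) := by
  induction x using induction_linear with
  | zero => simp
  | add x y hx hy => simp only [map_add, hx, hy]
  | single g c => simp [hσ, ← mul_assoc, ha]

section Leibniz

variable [AddCommMonoid G] {a : G → k} {σ : G → G}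

theorem leibniz_of_single {f : AddMonoidAlgebra k G →ₗ[k] AddMonoidAlgebra k G}
    (h : ∀ g g' c c', f (single g c * single g' c') =
      f (single g c) * single g' c' + single g c * f (single g' c'))
    (x y : AddMonoidAlgebra k G) : f (x * y) = f x * y + x * f y := by
  induction x using induction_linear with
  | zero => simp
  | add x x' hx hx' => simp only [add_mul, map_add, hx, hx']; ring
  | single g c =>
    induction y using induction_linear with
    | zero => simp
    | add y y' hy hy' => simp only [mul_add, map_add, hy, hy']; ring
    | single g' c' => exact h g g' c c'

theorem single_weightedShift_add (hσ : ∀ g h, a g ≠ 0 → σ (g + h) = σ g + h) (g h : G) (c : k) :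
    single (σ (g + h)) (a g * c) = single (σ g + h) (a g * c) := by
  by_cases hg : a g = 0
  · simp [hg]
  · rw [hσ g h hg]

-- Asking for `σ (g + h) = σ g + h` only where `a g ≠ 0` admits the truncated subtraction on `ℕ`
-- used by `∂_u`.
theorem weightedShift_mul (ha : ∀ g h, a (g + h) = a g + a h)
    (hσ : ∀ g h, a g ≠ 0 → σ (g + h) = σ g + h) (x y : AddMonoidAlgebra k G) :
    weightedShift a σ (x * y) = weightedShift a σ x * y + x * weightedShift a σ y := by
  refine leibniz_of_single (fun g h c d => ?_) x y
  have hg := single_weightedShift_add hσ g h (c * d)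
  have hh : single (σ (g + h)) (a h * (c * d)) = single (g + σ h) (a h * (c * d)) := by
    rw [add_comm g h, single_weightedShift_add hσ, add_comm]
  simp only [single_mul_single, weightedShift_single, ha, add_mul, single_add, hg, hh]
  congr 2 <;> ring

end Leibniz

end AddMonoidAlgebra

open AddMonoidAlgebra

theorem eth_eq : eth = weightedShift (fun p : ℤ × ℤ × ℕ => (Real.sqrt 2 : ℂ) * p.2.1)
    (fun p => (p.1, p.2.1 - 1, p.2.2)) := rfl

theorem ethBar_eq : ethBar = weightedShift (fun p : ℤ × ℤ × ℕ => (Real.sqrt 2 : ℂ) * p.1)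
    (fun p => (p.1 - 1, p.2.1, p.2.2)) := rfl

theorem du_eq : du = weightedShift (fun p : ℤ × ℤ × ℕ => (p.2.2 : ℂ))
    (fun p => (p.1, p.2.1, p.2.2 - 1)) := rfl

theorem ethW_eq : ethW = weightedShift (fun n : ℤ => (Real.sqrt 2 : ℂ) * n) (· - 1) := rfl

theorem ethR_eq : ethR = weightedShift (fun q : ℤ × ℤ => (Real.sqrt 2 : ℂ) * q.2)
    (fun q => (q.1, q.2 - 1)) := rfl

theorem ethBarR_eq : ethBarR = weightedShift (fun q : ℤ × ℤ => (Real.sqrt 2 : ℂ) * q.1)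
    (fun q => (q.1 - 1, q.2)) := rfl

theorem incY_apply (y : W) : incY y = mapDomain (fun n : ℤ => ((0 : ℤ), n, (0 : ℕ))) y := by
  rw [incY, lsum_lsingle_eq_mapDomainLinearMap]; rfl

theorem incYb_apply (y : W) : incYb y = mapDomain (fun m : ℤ => (m, (0 : ℤ), (0 : ℕ))) y := by
  rw [incYb, lsum_lsingle_eq_mapDomainLinearMap]; rfl

theorem incT_apply (t : LR) : incT t = mapDomain (fun q : ℤ × ℤ => (q.1, q.2, (0 : ℕ))) t := by
  rw [incT, lsum_lsingle_eq_mapDomainLinearMap]; rfl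

theorem jY_apply (y : W) : jY y = mapDomain (fun n : ℤ => ((0 : ℤ), n)) y := by
  rw [jY, lsum_lsingle_eq_mapDomainLinearMap]; rfl

theorem jYb_apply (y : W) : jYb y = mapDomain (fun m : ℤ => (m, (0 : ℤ))) y := by
  rw [jYb, lsum_lsingle_eq_mapDomainLinearMap]; rfl

theorem eth_mul (x y : RU) : eth (x * y) = eth x * y + x * eth y := by
  rw [eth_eq]
  refine weightedShift_mul (fun _ _ => ?_) (fun _ _ _ => ?_) x y
  · simp only [Prod.fst_add, Prod.snd_add]; push_cast; ring
  · ext <;> simp; ring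

theorem ethBar_mul (x y : RU) : ethBar (x * y) = ethBar x * y + x * ethBar y := by
  rw [ethBar_eq]
  refine weightedShift_mul (fun _ _ => ?_) (fun _ _ _ => ?_) x y
  · simp only [Prod.fst_add]; push_cast; ring
  · ext <;> simp; ring

theorem du_mul (x y : RU) : du (x * y) = du x * y + x * du y := by
  rw [du_eq]
  refine weightedShift_mul (fun _ _ => ?_) (fun _ _ hk => ?_) x y
  · simp only [Prod.snd_add]; push_cast; ring
  · have hk' := Nat.cast_ne_zero.mp hk
    ext <;> simp; omega

theorem eth_ethBar (x : RU) : eth (ethBar x) = ethBar (eth x) := by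
  rw [eth_eq, ethBar_eq]; exact weightedShift_comm (fun _ => by rfl) (fun _ => by ring) x

theorem du_eth (x : RU) : du (eth x) = eth (du x) := by
  rw [eth_eq, du_eq]; exact weightedShift_comm (fun _ => by rfl) (fun _ => by ring) x

theorem incY_mul (x y : W) : incY (x * y) = incY x * incY y := by
  simp only [incY_apply]
  exact mapDomain_mul ((AddMonoidHom.inr ℤ (ℤ × ℕ)).comp (AddMonoidHom.inl ℤ ℕ)) x y

theorem incYb_mul (x y : W) : incYb (x * y) = incYb x * incYb y := by
  simp only [incYb_apply]
  exact mapDomain_mul (AddMonoidHom.inl ℤ (ℤ × ℕ)) x y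

theorem incT_mul (x y : LR) : incT (x * y) = incT x * incT y := by
  simp only [incT_apply]
  exact mapDomain_mul ((AddMonoidHom.id ℤ).prodMap (AddMonoidHom.inl ℤ ℕ)) x y

theorem incT_jY (y : W) : incT (jY y) = incY y := by
  rw [incT_apply, jY_apply, incY_apply]
  ext : 1; simp [← Finsupp.mapDomain_comp]; rfl

theorem incT_jYb (y : W) : incT (jYb y) = incYb y := by
  rw [incT_apply, jYb_apply, incYb_apply]
  ext : 1; simp [← Finsupp.mapDomain_comp]; rfl

theorem eth_incY (y : W) : eth (incY y) = incY (ethW y) := by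
  simp only [incY_apply, eth_eq, ethW_eq]
  refine weightedShift_mapDomain (fun _ => ?_) (fun _ => ?_) y <;> rfl

theorem ethBar_incYb (y : W) : ethBar (incYb y) = incYb (ethW y) := by
  simp only [incYb_apply, ethBar_eq, ethW_eq]
  refine weightedShift_mapDomain (fun _ => ?_) (fun _ => ?_) y <;> rfl

theorem eth_incT (t : LR) : eth (incT t) = incT (ethR t) := by
  simp only [incT_apply, eth_eq, ethR_eq]
  refine weightedShift_mapDomain (fun _ => ?_) (fun _ => ?_) t <;> rfl

theorem ethBar_incT (t : LR) : ethBar (incT t) = incT (ethBarR t) := by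
  simp only [incT_apply, ethBar_eq, ethBarR_eq]
  refine weightedShift_mapDomain (fun _ => ?_) (fun _ => ?_) t <;> rfl

theorem ethBar_incY (y : W) : ethBar (incY y) = 0 := by
  rw [incY_apply, ethBar_eq]; exact weightedShift_mapDomain_eq_zero (fun _ => by simp) y

theorem eth_incYb (y : W) : eth (incYb y) = 0 := by
  rw [incYb_apply, eth_eq]; exact weightedShift_mapDomain_eq_zero (fun _ => by simp) y

theorem du_incT (t : LR) : du (incT t) = 0 := by
  rw [incT_apply, du_eq]; exact weightedShift_mapDomain_eq_zero (fun _ => by simp) t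

theorem eth_uVar : eth uVar = 0 := by simp [uVar, eth_eq]

theorem ethBar_uVar : ethBar uVar = 0 := by simp [uVar, ethBar_eq]

theorem du_uVar : du uVar = 1 := by simp [uVar, du_eq, one_def, Prod.mk_zero_zero]

theorem eth_eth_mul (x y : RU) :
    eth (eth (x * y)) = eth (eth x) * y + 2 * (eth x * eth y) + x * eth (eth y) := by
  rw [eth_mul, map_add, eth_mul, eth_mul]; ring

theorem incT_psiR (s : SymParam) :
    incT (psiR s) = eth (incY s.cY) + ethBar (incYb s.cYb) := by
  rw [psiR, map_add, incT_jY, incT_jYb, eth_incY, ethBar_incYb]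

theorem eth_incT_psiR (s : SymParam) : eth (incT (psiR s)) = eth (eth (incY s.cY)) := by
  rw [incT_psiR, map_add, eth_ethBar, eth_incYb, map_zero, add_zero]

theorem ethBar_incT_psiR (s : SymParam) :
    ethBar (incT (psiR s)) = ethBar (ethBar (incYb s.cYb)) := by
  rw [incT_psiR, map_add, ← eth_ethBar, ethBar_incY, map_zero, zero_add]

theorem du_fOf (s : SymParam) : du (fOf s) = (1 / 2 : ℂ) • incT (psiR s) := by
  simp [fOf, du_mul, du_incT, du_uVar]

theorem two_mul_du_eth_fOf (s : SymParam) : 2 * du (eth (fOf s)) = eth (eth (incY s.cY)) := by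
  rw [du_eth, du_fOf, map_smul, eth_incT_psiR, two_mul, ← add_smul]
  norm_num

theorem Dop_zero_zero_apply (s : SymParam) (g : RU) :
    Dop 0 0 s g = fOf s * du g + incY s.cY * eth g + incYb s.cYb * ethBar g := by
  simp [Dop]

theorem Dop_add_half_psiR_mul (s : SymParam) (g : RU) :
    Dop (3 / 2) (-(1 / 2)) s g + (1 / 2 : ℂ) • (incT (psiR s) * g)
      = Dop 0 0 s g + 2 * (eth (incY s.cY) * g) := by
  simp only [Dop, incT_psiR, add_mul, LinearMap.add_apply, LinearMap.smul_apply,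
    LinearMap.mulLeft_apply, zero_smul, add_zero, two_mul]
  module

theorem eth_eth_Dop_zero_zero (s : SymParam) (g : RU) :
    eth (eth (Dop 0 0 s g)) = Dop 0 0 s (eth (eth g)) + 2 * (eth (incY s.cY) * eth (eth g))
      + cOf s * du g + 2 * (eth (fOf s) * du (eth g)) + eth (eth (incY s.cY)) * eth g := by
  simp only [Dop_zero_zero_apply, map_add, eth_eth_mul, eth_incYb, ← du_eth, eth_ethBar, cOf,
    map_zero]
  ring

theorem eth_eth_Dop_fOf_sub_Dop_cOf (s t : SymParam) :
    eth (eth (Dop 0 0 s (fOf t))) - Dop (3 / 2) (-(1 / 2)) s (cOf t)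
      = (1 / 2 : ℂ) • (incT (psiR s) * cOf t + incT (psiR t) * cOf s)
        + (eth (fOf s) * eth (eth (incY t.cY)) + eth (fOf t) * eth (eth (incY s.cY))) := by
  rw [eth_eth_Dop_zero_zero, ← cOf, ← Dop_add_half_psiR_mul, du_fOf, ← two_mul_du_eth_fOf t,
    ← two_mul_du_eth_fOf s, mul_smul_comm, mul_comm (cOf s), smul_add]
  ring

theorem fOf_sBracket (s t : SymParam) :
    fOf (sBracket s t) = Dop 0 0 s (fOf t) - Dop 0 0 t (fOf s) := by
  have hψ : incT (psiR (sBracket s t))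
      = incY s.cY * eth (eth (incY t.cY)) - incY t.cY * eth (eth (incY s.cY))
        + (incYb s.cYb * ethBar (ethBar (incYb t.cYb))
          - incYb t.cYb * ethBar (ethBar (incYb s.cYb))) := by
    simp only [incT_psiR, sBracket, map_sub, incY_mul, incYb_mul, ← eth_incY, ← ethBar_incYb,
      eth_mul, ethBar_mul]
    ring
  have hT : incT (sBracket s t).T
      = incY s.cY * eth (incT t.T) + incYb s.cYb * ethBar (incT t.T)
        - incY t.cY * eth (incT s.T) - incYb t.cYb * ethBar (incT s.T)
        - (1 / 2 : ℂ) • (incT (psiR s) * incT t.T - incT (psiR t) * incT s.T) := by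
    simp only [sBracket, map_sub, map_add, map_smul, incT_mul, incT_jY, incT_jYb, eth_incT,
      ethBar_incT]
  rw [fOf, hT, hψ, Dop_zero_zero_apply, Dop_zero_zero_apply, du_fOf, du_fOf]
  simp only [fOf, map_add, map_smul, eth_mul, ethBar_mul, eth_uVar, ethBar_uVar, eth_incT_psiR,
    ethBar_incT_psiR, zero_mul, zero_add]
  simp only [Algebra.smul_def]
  ring

theorem cOf_sBracket (s t : SymParam) :
    cOf (sBracket s t) = eth (eth (Dop 0 0 s (fOf t))) - eth (eth (Dop 0 0 t (fOf s))) := by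
  rw [cOf, fOf_sBracket, map_sub, map_sub]

/-- The inhomogeneous term of the `σ⁰` transformation law satisfies
the cocycle condition: with `c_s := ð²f_s` and `D_s := D_s^{(3/2,−1/2)}`, one has
`D_{s₁}c_{s₂} − D_{s₂}c_{s₁} = c_{[s₁,s₂]}` for all symmetry parameters `s₁, s₂`. -/
theorem cocycle_condition (s₁ s₂ : SymParam) :
    Dop (3 / 2) (-(1 / 2)) s₁ (cOf s₂) - Dop (3 / 2) (-(1 / 2)) s₂ (cOf s₁)
      = cOf (sBracket s₁ s₂) := by
  have hsymm := eth_eth_Dop_fOf_sub_Dop_cOf s₂ s₁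
  rw [add_comm (incT (psiR s₂) * _), add_comm (eth (fOf s₂) * _),
    ← eth_eth_Dop_fOf_sub_Dop_cOf s₁ s₂] at hsymm
  rw [cOf_sBracket]
  linear_combination hsymm
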